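/- Let F be a selective ultrafilter on ℕ and x ∈ ℚ* a finite or infinitesimal hyperrational represented by (x_n). Then there exists B ∈ F such that the subsequence (x_n)_{n∈B} is a Cauchy sequence in ℚ. -/

import Mathlib

/-!
Since `x` is bounded along `F`, the reals `x n` have an `F`-limit `L`. A selective ultrafilter
is a P-point: given the countably many `F`-sets `Aₖ = {n | |x n - L| < 1/(k+1)}`, selectivity
applied to the map sending `n` to the first `k` with `n ∉ Aₖ` yields `B ∈ F` on which this map is
injective, so that `B \ Aₖ` is finite for every `k`. Along the increasing enumeration of `B`
the sequence `x` therefore converges to `L` and is Cauchy.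
-/

open Filter Set Topology

theorem Filter.Germ.ratCast_def {α : Type*} (φ : Ultrafilter α) (q : ℚ) :
    (q : Germ (φ : Filter α) ℚ) = ↑(fun _ : α => q) :=
  (map_ratCast ((Germ.coeRingHom (φ : Filter α)).comp (Pi.constRingHom α ℚ)) q).symm

theorem Filter.Germ.abs_le_ratCast_iff {α : Type*} {φ : Ultrafilter α} {x : α → ℚ} {q : ℚ} :
    |(x : Germ (φ : Filter α) ℚ)| ≤ (q : Germ (φ : Filter α) ℚ) ↔ ∀ᶠ n in φ, |x n| ≤ q := by
  rw [Germ.ratCast_def]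
  exact Germ.coe_le

theorem Ultrafilter.exists_tendsto_of_eventually_abs_le {α : Type*} {φ : Ultrafilter α}
    {u : α → ℝ} {q : ℝ} (h : ∀ᶠ n in φ, |u n| ≤ q) : ∃ L, Tendsto u φ (𝓝 L) := by
  obtain ⟨L, -, hL⟩ := (isCompact_closedBall (0 : ℝ) q).ultrafilter_le_nhds (φ.map u)
    (le_principal_iff.2 <| h.mono fun n hn => by simpa using hn)
  exact ⟨L, hL⟩

theorem Ultrafilter.le_cofinite_of_forall_singleton_notMem {α : Type*} {φ : Ultrafilter α}
    (h : ∀ a, {a} ∉ φ) : (φ : Filter α) ≤ cofinite :=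
  φ.le_cofinite_or_eq_pure.resolve_right fun ⟨a, ha⟩ => h a (ha ▸ rfl)

def Ultrafilter.IsSelective (F : Ultrafilter ℕ) : Prop :=
  ∀ f : ℕ → ℕ, (∀ i, f ⁻¹' {i} ∉ F) → ∃ B ∈ F, InjOn f B

theorem Ultrafilter.IsSelective.exists_mem_cofinite_inf_principal_le {F : Ultrafilter ℕ}
    (hsel : F.IsSelective) (hcof : (F : Filter ℕ) ≤ cofinite) {G : Filter ℕ}
    [G.IsCountablyGenerated] (hG : (F : Filter ℕ) ≤ G) :
    ∃ B ∈ F, cofinite ⊓ 𝓟 B ≤ G := by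
  classical
  obtain ⟨s, hs⟩ := G.exists_antitone_basis
  set A : ℕ → Set ℕ := fun k => s k \ Iic k
  have hA : ∀ k, A k ∈ F := fun k =>
    sdiff_mem (hG (hs.mem k)) (hcof (finite_Iic k).compl_mem_cofinite)
  have hexit : ∀ n, ∃ k, n ∉ A k := fun n => ⟨n, fun hn => hn.2 (le_refl n)⟩
  let f : ℕ → ℕ := fun n => Nat.find (hexit n)
  have hfib : ∀ i, f ⁻¹' {i} ∉ F := fun i hi =>
    F.compl_mem_iff_notMem.1
      (F.mem_of_superset hi fun n (hn : f n = i) => hn ▸ Nat.find_spec (hexit n)) (hA i)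
  obtain ⟨B, hBF, hinj⟩ := hsel f hfib
  refine ⟨B, hBF, fun S hS => ?_⟩
  obtain ⟨k, hk⟩ := hs.mem_iff.1 hS
  have hfin : (B \ A k).Finite :=
    ((finite_Iic k).subset (image_subset_iff.2 fun n hn => Nat.find_le hn.2)).of_finite_image
      (hinj.mono sdiff_subset)
  exact mem_inf_of_inter hfin.compl_mem_cofinite (mem_principal_self B)
    fun n ⟨hnA, hnB⟩ => hk (not_not.1 fun h => hnA ⟨hnB, h⟩ : n ∈ A k).1

theorem Rat.isCauSeq_abs_of_tendsto_cast {u : ℕ → ℚ} {L : ℝ}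
    (h : Tendsto (fun k => (u k : ℝ)) atTop (𝓝 L)) : IsCauSeq abs u := by
  intro ε hε
  obtain ⟨N, hN⟩ := isCauSeq_iff_cauchySeq.2 h.cauchySeq (ε : ℝ) (by exact_mod_cast hε)
  refine ⟨N, fun j hj => ?_⟩
  have hj' : |(u j : ℝ) - u N| < ε := hN j hj
  exact_mod_cast hj'

/-- If `F` is selective and the hyperrational represented by `(x_n)` is
finite or infinitesimal, then some big subsequence of `(x_n)` is Cauchy in ℚ. -/
theorem exists_cauchy_big_subsequence
    (F : Ultrafilter ℕ) (hnp : ∀ n : ℕ, {n} ∉ F)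
    (hsel : ∀ f : ℕ → ℕ, (∀ i, f ⁻¹' {i} ∉ F) → ∃ B ∈ F, Set.InjOn f B)
    (x : ℕ → ℚ)
    (hfin : ∃ q : ℚ, |(x : Germ (F : Filter ℕ) ℚ)| ≤ (q : Germ (F : Filter ℕ) ℚ)) :
    ∃ B ∈ F, ∀ e : ℕ → ℕ, StrictMono e → Set.range e = B →
      IsCauSeq abs (fun k => x (e k)) := by
  obtain ⟨q, hq⟩ := hfin
  have hbdd : ∀ᶠ n in F, |(x n : ℝ)| ≤ q :=
    (Germ.abs_le_ratCast_iff.1 hq).mono fun n hn => by exact_mod_cast hn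
  obtain ⟨L, hL⟩ := Ultrafilter.exists_tendsto_of_eventually_abs_le hbdd
  obtain ⟨B, hBF, hB⟩ := Ultrafilter.IsSelective.exists_mem_cofinite_inf_principal_le hsel
    (Ultrafilter.le_cofinite_of_forall_singleton_notMem hnp) hL.le_comap
  refine ⟨B, hBF, fun e he hrange => ?_⟩
  have he' : Tendsto e atTop (cofinite ⊓ 𝓟 B) :=
    tendsto_inf.2 ⟨Nat.cofinite_eq_atTop ▸ he.tendsto_atTop,
      tendsto_principal.2 <| Eventually.of_forall fun k => hrange ▸ mem_range_self k⟩
  have hxe : Tendsto (fun k => (x (e k) : ℝ)) atTop (𝓝 L) :=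
    (tendsto_comap (f := fun n => (x n : ℝ))).comp (he'.mono_right hB)
  exact Rat.isCauSeq_abs_of_tendsto_cast hxe
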